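/- Let k ≥ 1 and ℓ ≥ max{4, k²}, let N = |B_{k,ℓ}|, and assume N ≥ 16. Then every deterministic search strategy on T_{k,ℓ} that is correct on B_{k,ℓ} satisfies (1/N) · Σ_{t ∈ B_{k,ℓ}} Q(t) ≥ (3/4) · (⌊log₄ N⌋ − 2); in particular the average query cost over the uniform distribution on B_{k,ℓ} is Ω(k · log ℓ). -/
import Mathlib


/-- The vertex type of the hard-instance tree `T_{h,ℓ}`: `T_{0,ℓ}` is a single vertex,
and a vertex of `T_{h+1,ℓ}` is a spine position `i : Fin ℓ` together with either `none`
(the spine vertex `p^{h+1}_{i+1}` itself) or `some v` for a vertex `v` of the copy of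
`T_{h,ℓ}` attached at spine position `i`. -/
def Vtx (ℓ : ℕ) : ℕ → Type
  | 0 => Unit
  | h + 1 => Fin ℓ × Option (Vtx ℓ h)

instance VtxFintype (ℓ : ℕ) : ∀ h, Fintype (Vtx ℓ h)
  | 0 => inferInstanceAs (Fintype Unit)
  | h + 1 =>
      letI := VtxFintype ℓ h
      inferInstanceAs (Fintype (Fin ℓ × Option (Vtx ℓ h)))

instance VtxDecEq (ℓ : ℕ) : ∀ h, DecidableEq (Vtx ℓ h)
  | 0 => inferInstanceAs (DecidableEq Unit)
  | h + 1 =>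
      letI := VtxDecEq ℓ h
      inferInstanceAs (DecidableEq (Fin ℓ × Option (Vtx ℓ h)))

/-- The root of `T_{h,ℓ}`: the first spine vertex `p^h_1`. -/
def treeRoot (ℓ : ℕ) [NeZero ℓ] : ∀ h, Vtx ℓ h
  | 0 => ()
  | _ + 1 => ((0 : Fin ℓ), none)

/-- One direction of the edge relation of `T_{h,ℓ}`: consecutive spine vertices are
adjacent, each spine vertex is adjacent to the root of the copy of `T_{h-1,ℓ}`
attached to it, and edges inside an attached copy are those of `T_{h-1,ℓ}`. -/
def treeAdj (ℓ : ℕ) [NeZero ℓ] : ∀ h, Vtx ℓ h → Vtx ℓ h → Prop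
  | 0, _, _ => False
  | h + 1, a, b =>
      (a.2 = none ∧ b.2 = none ∧ a.1.val + 1 = b.1.val) ∨
      (a.1 = b.1 ∧ a.2 = none ∧ b.2 = some (treeRoot ℓ h)) ∨
      (a.1 = b.1 ∧ ∃ x y, a.2 = some x ∧ b.2 = some y ∧ treeAdj ℓ h x y)

/-- The hard-instance tree `T_{h,ℓ}` as a simple graph. -/
def treeT (ℓ : ℕ) [NeZero ℓ] (h : ℕ) : SimpleGraph (Vtx ℓ h) :=
  SimpleGraph.fromRel (treeAdj ℓ h)

/-- The bottom-level vertex `v_α` determined by a sequence of descent choices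
`α = (i_k, …, i_1)` (here `α j` is the 0-indexed spine position chosen at the
`j`-th level from the top, so `α 0` is the top-level choice `i_k`). -/
def vAlpha (ℓ : ℕ) : ∀ k, (Fin k → Fin ℓ) → Vtx ℓ k
  | 0, _ => ()
  | k + 1, α => (α 0, some (vAlpha ℓ k fun j => α j.succ))
/-- The direction oracle: when the target is `t` and we query `v`, the oracle
returns `none` (meaning "here") if `v = t`, and otherwise returns `some u` where
`u` is the unique neighbor of `v` on the path from `v` to `t` (i.e. the neighbor
strictly closer to `t`). -/
noncomputable def dirO {V : Type} (T : SimpleGraph V) (t v : V) : Option V :=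
  letI : Decidable (∃ u, T.Adj v u ∧ T.dist u t + 1 = T.dist v t) := Classical.dec _
  if h : ∃ u, T.Adj v u ∧ T.dist u t + 1 = T.dist v t then some h.choose else none

/-- A deterministic search strategy: chooses the next vertex to query as a
function of the history of (query, oracle answer) pairs so far. -/
def Strategy (V : Type) := List (V × Option V) → V

/-- The history of the first `n` queries and answers when running strategy `σ`
against target `t` in tree `T`. -/
noncomputable def histRun {V : Type} (T : SimpleGraph V) (σ : Strategy V) (t : V) :
    ℕ → List (V × Option V)
  | 0 => []
  | n + 1 =>
      histRun T σ t n ++ [(σ (histRun T σ t n), dirO T t (σ (histRun T σ t n)))]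

/-- The `n`-th query (0-indexed) made by strategy `σ` against target `t`. -/
noncomputable def queryAt {V : Type} (T : SimpleGraph V) (σ : Strategy V) (t : V) (n : ℕ) : V :=
  σ (histRun T σ t n)

/-- The query cost of strategy `σ` on target `t`: the number of queries made up to
and including the first query of `t` itself. -/
noncomputable def costOf {V : Type} (T : SimpleGraph V) (σ : Strategy V) (t : V) : ℕ :=
  sInf {n | queryAt T σ t n = t} + 1

/-- A strategy is correct on a target set `S` if for every target in `S` it
eventually queries the target. -/
def CorrectOn {V : Type} (T : SimpleGraph V) (σ : Strategy V) (S : Set V) : Prop :=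
  ∀ t ∈ S, ∃ n, queryAt T σ t n = t

lemma treeAdj_zero (ℓ : ℕ) [NeZero ℓ] (a b : Vtx ℓ 0) : treeAdj ℓ 0 a b ↔ False := Iff.rfl

lemma treeAdj_succ (ℓ h : ℕ) [NeZero ℓ] (a b : Fin ℓ × Option (Vtx ℓ h)) :
    treeAdj ℓ (h+1) a b ↔
      ((a.2 = none ∧ b.2 = none ∧ a.1.val + 1 = b.1.val) ∨
      (a.1 = b.1 ∧ a.2 = none ∧ b.2 = some (treeRoot ℓ h)) ∨
      (a.1 = b.1 ∧ ∃ x y, a.2 = some x ∧ b.2 = some y ∧ treeAdj ℓ h x y)) := Iff.rfl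

lemma treeRoot_succ (ℓ h : ℕ) [NeZero ℓ] :
    treeRoot ℓ (h+1) = ((0 : Fin ℓ), (none : Option (Vtx ℓ h))) := rfl

lemma root_nbr (ℓ : ℕ) [NeZero ℓ] (h : ℕ) :
    ∃ a b : Vtx ℓ h, ∀ u, treeAdj ℓ h (treeRoot ℓ h) u ∨ treeAdj ℓ h u (treeRoot ℓ h) →
      u = a ∨ u = b := by
  have hℓ : 0 < ℓ := Nat.pos_of_ne_zero (NeZero.ne ℓ)
  cases h with
  | zero =>
    exact ⟨treeRoot ℓ 0, treeRoot ℓ 0, fun u hu => by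
      rcases hu with hu | hu <;> exact ((treeAdj_zero ℓ _ _).mp hu).elim⟩
  | succ h =>
    refine ⟨((⟨1 % ℓ, Nat.mod_lt _ hℓ⟩ : Fin ℓ), none),
      ((0 : Fin ℓ), some (treeRoot ℓ h)), fun u hu => ?_⟩
    obtain ⟨j, o⟩ : Fin ℓ × Option (Vtx ℓ h) := u
    rw [treeRoot_succ] at hu
    rcases hu with hu | hu <;>
      rcases (treeAdj_succ ℓ h _ _).mp hu with ⟨h1, h2, h3⟩ | ⟨h1, h2, h3⟩ | ⟨h1, x, y, h2, h3, h4⟩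
    · left
      simp only at h1 h2 h3
      subst h2
      refine Prod.ext (Fin.ext ?_) rfl
      simp only [Fin.val_zero] at h3
      have : (1 : ℕ) % ℓ = 1 := Nat.mod_eq_of_lt (by omega)
      simp [this, ← h3]
    · right
      simp only at h1 h3
      subst h3
      exact Prod.ext h1.symm rfl
    · simp at h2
    · simp only [Fin.val_zero] at h3; omega
    · simp at h3
    · simp at h3

lemma nbr_sub (ℓ : ℕ) [NeZero ℓ] : ∀ (h : ℕ) (v : Vtx ℓ h),
    ∃ a b c : Vtx ℓ h, ∀ u, treeAdj ℓ h v u ∨ treeAdj ℓ h u v →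
      u = a ∨ u = b ∨ u = c
  | 0, v =>
    ⟨v, v, v, fun u hu => by
      rcases hu with hu | hu <;> exact ((treeAdj_zero ℓ _ _).mp hu).elim⟩
  | h + 1, v => by
    have hℓ : 0 < ℓ := Nat.pos_of_ne_zero (NeZero.ne ℓ)
    obtain ⟨i, o⟩ : Fin ℓ × Option (Vtx ℓ h) := v
    cases o with
    | none =>
      refine ⟨((⟨(i.val + 1) % ℓ, Nat.mod_lt _ hℓ⟩ : Fin ℓ), none),
        ((⟨i.val - 1, lt_of_le_of_lt (Nat.sub_le _ _) i.isLt⟩ : Fin ℓ), none),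
        (i, some (treeRoot ℓ h)), fun u hu => ?_⟩
      obtain ⟨j, o'⟩ : Fin ℓ × Option (Vtx ℓ h) := u
      rcases hu with hu | hu <;>
        rcases (treeAdj_succ ℓ h _ _).mp hu with ⟨h1, h2, h3⟩ | ⟨h1, h2, h3⟩ | ⟨h1, x, y, h2, h3, h4⟩
      · left
        simp only at h1 h2 h3
        subst h2
        refine Prod.ext (Fin.ext ?_) rfl
        have : (i.val + 1) % ℓ = i.val + 1 := Nat.mod_eq_of_lt (by omega)
        simp [this, ← h3]
      · right; right
        simp only at h1 h3
        subst h3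
        exact Prod.ext h1.symm rfl
      · simp at h2
      · right; left
        simp only at h1 h3
        subst h1
        exact Prod.ext (Fin.ext (by simp only; omega)) rfl
      · simp at h3
      · simp at h3
    | some x =>
      by_cases hx : x = treeRoot ℓ h
      · subst hx
        obtain ⟨a', b', hroot⟩ := root_nbr ℓ h
        refine ⟨(i, none), (i, some a'), (i, some b'), fun u hu => ?_⟩
        obtain ⟨j, o'⟩ : Fin ℓ × Option (Vtx ℓ h) := u
        rcases hu with hu | hu <;>
          rcases (treeAdj_succ ℓ h _ _).mp hu with ⟨h1, h2, h3⟩ | ⟨h1, h2, h3⟩ | ⟨h1, x', y, h2, h3, h4⟩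
        · simp at h1
        · simp at h2
        · simp only [Option.some.injEq] at h1 h2 h3
          subst h3
          have h4' : treeAdj ℓ h (treeRoot ℓ h) y := by rw [h2]; exact h4
          cases hroot y (Or.inl h4') with
          | inl h => right; left; exact Prod.ext h1.symm (by rw [h])
          | inr h => right; right; exact Prod.ext h1.symm (by rw [h])
        · simp at h2
        · left
          simp only at h1 h2
          subst h2
          exact Prod.ext h1 rfl
        · simp only [Option.some.injEq] at h2 h3
          subst h2
          have h4' : treeAdj ℓ h x' (treeRoot ℓ h) := by rw [h3]; exact h4
          cases hroot x' (Or.inr h4') with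
          | inl h => right; left; exact Prod.ext h1 (by rw [h])
          | inr h => right; right; exact Prod.ext h1 (by rw [h])
      · obtain ⟨a, b, c, hnb⟩ := nbr_sub ℓ h x
        refine ⟨(i, some a), (i, some b), (i, some c), fun u hu => ?_⟩
        obtain ⟨j, o'⟩ : Fin ℓ × Option (Vtx ℓ h) := u
        rcases hu with hu | hu <;>
          rcases (treeAdj_succ ℓ h _ _).mp hu with ⟨h1, h2, h3⟩ | ⟨h1, h2, h3⟩ | ⟨h1, x', y, h2, h3, h4⟩
        · simp at h1
        · simp at h2
        · simp only [Option.some.injEq] at h1 h2 h3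
          subst h3
          rcases hnb y (Or.inl (h2 ▸ h4)) with h | h | h
          · left; exact Prod.ext h1.symm (by rw [h])
          · right; left; exact Prod.ext h1.symm (by rw [h])
          · right; right; exact Prod.ext h1.symm (by rw [h])
        · simp at h2
        · simp only [Option.some.injEq] at h3
          exact absurd h3 hx
        · simp only [Option.some.injEq] at h2 h3
          subst h2
          rcases hnb x' (Or.inr (h3 ▸ h4)) with h | h | h
          · left; exact Prod.ext h1 (by rw [h])
          · right; left; exact Prod.ext h1 (by rw [h])
          · right; right; exact Prod.ext h1 (by rw [h])

section Count

variable {V : Type} (T : SimpleGraph V)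

lemma adj_of_dirO {t v u : V} (h : dirO T t v = some u) : T.Adj v u := by
  unfold dirO at h
  split at h
  · rename_i hp
    obtain ⟨rfl⟩ := Option.some.injEq _ _ ▸ h
    exact (Option.some.inj h) ▸ hp.choose_spec.1
  · exact absurd h (by simp)

/-- Shifted strategy: behave like `σ` after a forced first round `p`. -/
def shft (σ : Strategy V) (p : V × Option V) : Strategy V := fun l => σ (p :: l)

lemma hist_shift (σ : Strategy V) (t : V) (n : ℕ) :
    histRun T σ t (n + 1) =
      (σ [], dirO T t (σ [])) :: histRun T (shft σ (σ [], dirO T t (σ []))) t n := by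
  induction n with
  | zero => simp [histRun]
  | succ n ih =>
      rw [show histRun T σ t (n+1+1) = histRun T σ t (n+1) ++
        [(σ (histRun T σ t (n+1)), dirO T t (σ (histRun T σ t (n+1))))] from rfl, ih]
      rfl

lemma query_shift (σ : Strategy V) (t : V) (n : ℕ) :
    queryAt T σ t (n + 1) = queryAt T (shft σ (σ [], dirO T t (σ []))) t n := by
  unfold queryAt
  rw [hist_shift]
  rfl

/-- The set of targets found within the first `c` queries. -/
def Ecnt (σ : Strategy V) (c : ℕ) : Set V := {t | ∃ n < c, queryAt T σ t n = t}

/-- The branching bound `g c = (4^c - 1)/3`. -/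
def gbd : ℕ → ℕ
  | 0 => 0
  | c + 1 => 4 * gbd c + 1

lemma gbd_lt (c : ℕ) : 3 * gbd c < 4 ^ c := by
  induction c with
  | zero => simp [gbd]
  | succ c ih =>
    have : (4:ℕ) ^ (c+1) = 4 * 4 ^ c := by ring
    simp only [gbd]
    omega

lemma Ecnt_card [Fintype V]
    (hdeg : ∀ v : V, ∃ a b c : V, ∀ u, T.Adj v u → u = a ∨ u = b ∨ u = c) :
    ∀ (c : ℕ) (σ : Strategy V), (Ecnt T σ c).ncard ≤ gbd c := by
  intro c
  induction c with
  | zero =>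
    intro σ
    have : Ecnt T σ 0 = ∅ := by
      ext t; simp [Ecnt]
    simp [this, gbd]
  | succ c ih =>
    intro σ
    obtain ⟨a, b, c', hab⟩ := hdeg (σ [])
    have hsub : Ecnt T σ (c + 1) ⊆
        insert (σ []) (Ecnt T (shft σ (σ [], some a)) c ∪ Ecnt T (shft σ (σ [], some b)) c ∪
          Ecnt T (shft σ (σ [], some c')) c ∪ Ecnt T (shft σ (σ [], none)) c) := by
      intro t ht
      obtain ⟨n, hn, hq⟩ := ht
      by_cases htv : t = σ []
      · exact Set.mem_insert_iff.mpr (Or.inl htv)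
      · refine Set.mem_insert_of_mem _ ?_
        obtain ⟨m, rfl⟩ : ∃ m, n = m + 1 := by
          rcases n with _ | m
          · exact absurd hq.symm htv
          · exact ⟨m, rfl⟩
        have hq' : queryAt T (shft σ (σ [], dirO T t (σ []))) t m = t := by
          rw [← query_shift]; exact hq
        have hm : m < c := by omega
        rcases hd : dirO T t (σ []) with _ | u
        · right
          exact ⟨m, hm, by rw [← hd]; exact hq'⟩
        · rcases hab u (adj_of_dirO T hd) with rfl | rfl | rfl
          · left; left; left; exact ⟨m, hm, by rw [← hd]; exact hq'⟩
          · left; left; right; exact ⟨m, hm, by rw [← hd]; exact hq'⟩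
          · left; right; exact ⟨m, hm, by rw [← hd]; exact hq'⟩
    calc (Ecnt T σ (c + 1)).ncard ≤ _ := Set.ncard_le_ncard hsub (Set.toFinite _)
      _ ≤ _ + 1 := Set.ncard_insert_le _ _
      _ ≤ gbd (c + 1) := by
          have h1 := Set.ncard_union_le (Ecnt T (shft σ (σ [], some a)) c ∪
            Ecnt T (shft σ (σ [], some b)) c ∪ Ecnt T (shft σ (σ [], some c')) c)
            (Ecnt T (shft σ (σ [], none)) c)
          have h2 := Set.ncard_union_le (Ecnt T (shft σ (σ [], some a)) c ∪
            Ecnt T (shft σ (σ [], some b)) c) (Ecnt T (shft σ (σ [], some c')) c)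
          have h3 := Set.ncard_union_le (Ecnt T (shft σ (σ [], some a)) c)
            (Ecnt T (shft σ (σ [], some b)) c)
          have i1 := ih (shft σ (σ [], some a))
          have i2 := ih (shft σ (σ [], some b))
          have i3 := ih (shft σ (σ [], some c'))
          have i4 := ih (shft σ (σ [], none))
          simp only [gbd]
          omega

end Count

/-- Let `k ≥ 1`, `ℓ ≥ max{4, k²}`, let `B = B_{k,ℓ}` be the bottom-level
target set of `T_{k,ℓ}`, let `N = |B|` and assume `N ≥ 16`.  Then every deterministic
search strategy on `T_{k,ℓ}` correct on `B` satisfies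
`(1/N) · Σ_{t ∈ B} Q(t) ≥ (3/4) · (⌊log₄ N⌋ − 2)`. -/
theorem hard_tree_average_cost_lower_bound (k ℓ : ℕ) [NeZero ℓ] (hk : 1 ≤ k)
    (h4 : 4 ≤ ℓ) (hk2 : k ^ 2 ≤ ℓ)
    (B : Set (Vtx ℓ k))
    (hB : B = vAlpha ℓ k '' {α : Fin k → Fin ℓ | ∀ j, (ℓ + 1) / 2 ≤ (α j).val + 1})
    (N : ℕ) (hN : N = B.ncard) (h16 : 16 ≤ N)
    (σ : Strategy (Vtx ℓ k)) (hσ : CorrectOn (treeT ℓ k) σ B) :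
    (3 / 4 : ℝ) * ((Nat.log 4 N : ℝ) - 2) ≤
      (1 / N : ℝ) * ∑ t ∈ (Set.toFinite B).toFinset, (costOf (treeT ℓ k) σ t : ℝ) := by
  classical
  have hdeg : ∀ v : Vtx ℓ k, ∃ a b c : Vtx ℓ k,
      ∀ u, (treeT ℓ k).Adj v u → u = a ∨ u = b ∨ u = c := by
    intro v
    obtain ⟨a, b, c, hs⟩ := nbr_sub ℓ k v
    exact ⟨a, b, c, fun u hu => hs u ((SimpleGraph.fromRel_adj _ _ _).mp hu).2⟩
  set c := Nat.log 4 N - 2 with hc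
  have hlog : 2 ≤ Nat.log 4 N := by
    have h2 : Nat.log 4 16 = 2 :=
      Nat.log_eq_of_pow_le_of_lt_pow (by norm_num) (by norm_num)
    calc 2 = Nat.log 4 16 := h2.symm
      _ ≤ Nat.log 4 N := Nat.log_mono_right h16
  have hpow : 16 * 4 ^ c ≤ N := by
    have h1 : 4 ^ Nat.log 4 N ≤ N := Nat.pow_log_le_self 4 (by omega)
    have h2 : 4 ^ Nat.log 4 N = 16 * 4 ^ c := by
      rw [show Nat.log 4 N = c + 2 by omega]; ring
    omega
  have hE := Ecnt_card (treeT ℓ k) hdeg c σ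
  have hgb : 16 * gbd c ≤ N := by
    have h1 := gbd_lt c
    set x := (4:ℕ) ^ c with hx
    omega
  set E := Ecnt (treeT ℓ k) σ c with hEdef
  have hkey : ∀ t ∈ B \ E, c + 1 ≤ costOf (treeT ℓ k) σ t := by
    intro t ht
    by_contra hcon
    push_neg at hcon
    have hne : {n | queryAt (treeT ℓ k) σ t n = t}.Nonempty := hσ t ht.1
    have hmem := Nat.sInf_mem hne
    have hlt : sInf {n | queryAt (treeT ℓ k) σ t n = t} < c := by
      have hco : costOf (treeT ℓ k) σ t
          = sInf {n | queryAt (treeT ℓ k) σ t n = t} + 1 := rfl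
      omega
    exact ht.2 ⟨_, hlt, hmem⟩
  have hcardB : (Set.toFinite B).toFinset.card = N := by
    rw [hN, Set.ncard_eq_toFinset_card]
  have hdiff : N - gbd c ≤ (B \ E).ncard := by
    have hsub : B ⊆ (B \ E) ∪ E := by
      intro t ht
      by_cases h : t ∈ E
      · exact Or.inr h
      · exact Or.inl ⟨ht, h⟩
    have h1 := Set.ncard_le_ncard hsub (Set.toFinite _)
    have h2 := Set.ncard_union_le (B \ E) E
    omega
  have hsum : (c + 1) * (N - gbd c) ≤ ∑ t ∈ (Set.toFinite B).toFinset, costOf (treeT ℓ k) σ t := by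
    have hsub : (Set.toFinite (B \ E)).toFinset ⊆ (Set.toFinite B).toFinset :=
      Set.Finite.toFinset_subset_toFinset.mpr Set.diff_subset
    calc (c + 1) * (N - gbd c) ≤ (c + 1) * (B \ E).ncard := Nat.mul_le_mul_left _ hdiff
      _ = (Set.toFinite (B \ E)).toFinset.card * (c + 1) := by
          rw [Set.ncard_eq_toFinset_card]; ring
      _ ≤ ∑ t ∈ (Set.toFinite (B \ E)).toFinset, costOf (treeT ℓ k) σ t := by
          have := Finset.card_nsmul_le_sum (Set.toFinite (B \ E)).toFinset
            (costOf (treeT ℓ k) σ) (c + 1) (fun t ht => hkey t (by simpa using ht))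
          simpa [smul_eq_mul] using this
      _ ≤ _ := Finset.sum_le_sum_of_subset hsub
  have hnum : 3 * (c * N) ≤ 4 * ((c + 1) * (N - gbd c)) := by
    have h1 : 3 * N ≤ 4 * (N - gbd c) := by omega
    calc 3 * (c * N) = c * (3 * N) := by ring
      _ ≤ c * (4 * (N - gbd c)) := Nat.mul_le_mul_left _ h1
      _ ≤ (c + 1) * (4 * (N - gbd c)) := Nat.mul_le_mul_right _ (by omega)
      _ = 4 * ((c + 1) * (N - gbd c)) := by ring
  have hN0 : (0 : ℝ) < N := by
    have : 0 < N := by omega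
    exact_mod_cast this
  rw [one_div, inv_mul_eq_div, le_div_iff₀ hN0]
  have hcast : ((Nat.log 4 N : ℝ) - 2) = (c : ℝ) := by
    rw [hc, Nat.cast_sub hlog]; norm_num
  rw [hcast]
  have hgN : gbd c ≤ N := by omega
  have hsumR : (((c + 1) * (N - gbd c) : ℕ) : ℝ) ≤
      ∑ t ∈ (Set.toFinite B).toFinset, (costOf (treeT ℓ k) σ t : ℝ) := by
    rw [← Nat.cast_sum]
    exact_mod_cast hsum
  have hcastsub : (((c + 1) * (N - gbd c) : ℕ) : ℝ)
      = ((c : ℝ) + 1) * ((N : ℝ) - (gbd c : ℝ)) := by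
    push_cast [Nat.cast_sub hgN]; ring
  have hnumR : (3 / 4 : ℝ) * (c : ℝ) * (N : ℝ) ≤ (((c + 1) * (N - gbd c) : ℕ) : ℝ) := by
    rw [hcastsub]
    have h3 : ((3 * (c * N) : ℕ) : ℝ) ≤ ((4 * ((c + 1) * (N - gbd c)) : ℕ) : ℝ) := by
      exact_mod_cast hnum
    push_cast [Nat.cast_sub hgN] at h3
    linarith
  exact hnumR.trans hsumR
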